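/- arXiv:2404.06624 — 3 statements merged into one kernel-verified Lean document; each statement's English description precedes it below -/
import Mathlib

section
/- If the argmax ℓ_t in the definition of Ω_t := max_{0 ≤ k ≤ min(t,W-1)} ∑_{i=1}^k (c_{t-i} - ρC̄) satisfies ℓ_t < W-1, then Ω_{t+1} = max(Ω_t + c_t - ρC̄, 0). -/
/-!
Prefix sums of length `k + 1` at time `t + 1` are `c t - ρ C̄` plus prefix sums of length `k` at
time `t`, and the empty prefix contributes `0`; hence the Lindley-type recursion
`Ω_{t+1}^{n+1} = max (0, c t - ρ C̄ + Ω_t^n)`. The window caps the length at `W - 1`, so the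
recursion feeds on `Ω_t^{min(t, W-2)}`; since the maximum at time `t` is attained below `W - 1`,
this equals `Ω_t^{min(t, W-1)}`.
-/

/-- Ω_t^n := max_{0 ≤ k ≤ n} ∑_{i=1}^k (c_{t-i} - ρ·C̄), empty sum = 0. -/
noncomputable def Omega (c : ℕ → ℝ) (ρ Cb : ℝ) (t n : ℕ) : ℝ :=
  (Finset.range (n + 1)).sup' (Finset.nonempty_range_iff.mpr (Nat.succ_ne_zero n))
    (fun k => ∑ i ∈ Finset.Icc 1 k, (c (t - i) - ρ * Cb))

open Finset

theorem Finset.sum_Icc_one_sub_succ {M : Type*} [AddCommMonoid M] (f : ℕ → M) (t k : ℕ) :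
    ∑ i ∈ Icc 1 (k + 1), f (t + 1 - i) = f t + ∑ i ∈ Icc 1 k, f (t - i) := by
  induction k with
  | zero => simp
  | succ k ih =>
    rw [sum_Icc_succ_top (by omega), ih, sum_Icc_succ_top (by omega), add_assoc,
      show t + 1 - (k + 1 + 1) = t - (k + 1) by omega]

section Omega

variable (c : ℕ → ℝ) (ρ Cb : ℝ) (t : ℕ)

theorem sum_le_Omega {k n : ℕ} (h : k ≤ n) :
    ∑ i ∈ Icc 1 k, (c (t - i) - ρ * Cb) ≤ Omega c ρ Cb t n :=
  le_sup' (fun k => ∑ i ∈ Icc 1 k, (c (t - i) - ρ * Cb)) (mem_range.mpr (Nat.lt_succ_of_le h))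

theorem Omega_mono {m n : ℕ} (h : m ≤ n) : Omega c ρ Cb t m ≤ Omega c ρ Cb t n :=
  sup'_le _ _ fun _ hk => sum_le_Omega c ρ Cb t (by grind)

theorem Omega_eq_of_attained {ℓ m n : ℕ} (hℓm : ℓ ≤ m) (hmn : m ≤ n)
    (hℓ : ∑ i ∈ Icc 1 ℓ, (c (t - i) - ρ * Cb) = Omega c ρ Cb t n) :
    Omega c ρ Cb t m = Omega c ρ Cb t n :=
  le_antisymm (Omega_mono c ρ Cb t hmn) (hℓ ▸ sum_le_Omega c ρ Cb t hℓm)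

theorem Omega_zero : Omega c ρ Cb t 0 = 0 := by
  simp [Omega]

theorem Omega_succ (n : ℕ) :
    Omega c ρ Cb t (n + 1) =
      max (∑ i ∈ Icc 1 (n + 1), (c (t - i) - ρ * Cb)) (Omega c ρ Cb t n) :=
  (sup'_congr _ range_add_one fun _ _ => rfl).trans (sup'_insert ..)

theorem Omega_succ_succ (n : ℕ) :
    Omega c ρ Cb (t + 1) (n + 1) = max 0 (c t - ρ * Cb + Omega c ρ Cb t n) := by
  induction n with
  | zero => simp [Omega_succ, Omega_zero, max_comm]
  | succ n ih =>
    rw [Omega_succ, ih, Omega_succ, sum_Icc_one_sub_succ (fun s => c s - ρ * Cb),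
      ← max_add_add_left, max_left_comm]

end Omega

theorem stmt_1_general (c : ℕ → ℝ) (ρ Cb : ℝ)
    (W : ℕ) (t : ℕ) (ℓ : ℕ)
    -- ℓ is an index achieving the maximum defining Ω_t := Ω_t^{min(t,W-1)}
    (hℓ_max : (∑ i ∈ Finset.Icc 1 ℓ, (c (t - i) - ρ * Cb)) = Omega c ρ Cb t (min t (W - 1)))
    (hℓ_lt : ℓ < W - 1) :
    Omega c ρ Cb (t + 1) (min (t + 1) (W - 1)) =
      max (Omega c ρ Cb t (min t (W - 1)) + c t - ρ * Cb) 0 := by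
  have hwindow : min (t + 1) (W - 1) = min t (W - 2) + 1 := by omega
  have htruncate : Omega c ρ Cb t (min t (W - 2)) = Omega c ρ Cb t (min t (W - 1)) := by
    rcases le_or_gt t (W - 2) with ht | ht
    · rw [min_eq_left ht, min_eq_left (by omega)]
    · exact Omega_eq_of_attained c ρ Cb t (by omega) (by omega) hℓ_max
  rw [hwindow, Omega_succ_succ, htruncate, max_comm, add_sub_assoc, add_comm]

theorem stmt_1 (c : ℕ → ℝ) (ρ Cb : ℝ) (hρ : ρ ∈ Set.Icc (0:ℝ) 1) (hCb : 0 < Cb)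
    (W : ℕ) (hW : 1 ≤ W) (t : ℕ) (ℓ : ℕ)
    -- ℓ is an index achieving the maximum defining Ω_t := Ω_t^{min(t,W-1)}
    (hℓ_le : ℓ ≤ min t (W - 1))
    (hℓ_max : (∑ i ∈ Finset.Icc 1 ℓ, (c (t - i) - ρ * Cb)) = Omega c ρ Cb t (min t (W - 1)))
    (hℓ_lt : ℓ < W - 1) :
    Omega c ρ Cb (t + 1) (min (t + 1) (W - 1)) =
      max (Omega c ρ Cb t (min t (W - 1)) + c t - ρ * Cb) 0 :=
  stmt_1_general c ρ Cb W t ℓ hℓ_max hℓ_lt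
end

section
/- Under the sliding-window constraint ∑_{i=t-min(t,W-1)}^{t} c_i ≤ W·C̄ for all t, the virtual queue Q defined by Q_0 = 0 and Q_{t+1} = max(Q_t + c_t - C̄, 0) returns to zero within every window of W consecutive periods: for every interval of W successive periods there exists t in the interval with Q_t = 0. -/
/-!
While the queue stays positive the `max` in its recursion is inactive, so it telescopes:
after a zero at `s`, staying positive through `s + W` would give
`Q (s + W) = ∑_{s ≤ i < s + W} c i - W C̄ ≤ 0` by the window constraint. Hence consecutive
zeros are at most `W` apart, and since `Q 0 = 0` every window of length `W` contains one.
-/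

open Finset

theorem Nat.exists_mem_Ico_of_gap_le {P : ℕ → Prop} {W : ℕ} (hW : 1 ≤ W) (h0 : P 0)
    (hgap : ∀ s, P s → ∃ t, s < t ∧ t ≤ s + W ∧ P t) (t0 : ℕ) :
    ∃ t, t0 ≤ t ∧ t < t0 + W ∧ P t := by
  induction t0 with
  | zero => exact ⟨0, le_rfl, by omega, h0⟩
  | succ t0 ih =>
    obtain ⟨t, ht0, htW, hPt⟩ := ih
    rcases ht0.lt_or_eq with hlt | rfl
    · exact ⟨t, hlt, by omega, hPt⟩
    · obtain ⟨t', hlt, hle, hPt'⟩ := hgap _ hPt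
      exact ⟨t', hlt, by omega, hPt'⟩

section Queue

variable {c : ℕ → ℝ} {Cb : ℝ} {Q : ℕ → ℝ}

theorem queue_succ_nonneg (hQ : ∀ t : ℕ, Q (t + 1) = max (Q t + c t - Cb) 0) (t : ℕ) :
    0 ≤ Q (t + 1) :=
  hQ t ▸ le_max_right _ _

theorem queue_succ_of_pos (hQ : ∀ t : ℕ, Q (t + 1) = max (Q t + c t - Cb) 0) {t : ℕ}
    (hpos : 0 < Q (t + 1)) : Q (t + 1) = Q t + c t - Cb := by
  rw [hQ] at hpos ⊢
  exact max_eq_left ((lt_max_iff.mp hpos).resolve_right (lt_irrefl 0)).le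

theorem queue_eq_add_sum_sub_of_pos (hQ : ∀ t : ℕ, Q (t + 1) = max (Q t + c t - Cb) 0)
    {s t : ℕ} (hst : s ≤ t)
    (hpos : ∀ j, s < j → j ≤ t → 0 < Q j) :
    Q t = Q s + ∑ i ∈ Ico s t, c i - (t - s : ℕ) * Cb := by
  induction t, hst using Nat.le_induction with
  | base => simp
  | succ t hst ih =>
    rw [queue_succ_of_pos hQ (hpos _ (by omega) le_rfl),
      ih fun j hsj hjt => hpos j hsj (by omega), sum_Ico_succ_top hst, Nat.succ_sub hst]
    push_cast
    ring

theorem exists_queue_eq_zero_of_window (hQ : ∀ t : ℕ, Q (t + 1) = max (Q t + c t - Cb) 0)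
    {W : ℕ} (hW : 1 ≤ W)
    (hwin : ∀ t : ℕ, ∑ i ∈ Icc (t + 1 - W) t, c i ≤ W * Cb) {s : ℕ} (hs : Q s = 0) :
    ∃ t, s < t ∧ t ≤ s + W ∧ Q t = 0 := by
  by_contra! hne
  have hpos : ∀ j, s < j → j ≤ s + W → 0 < Q j := fun j hsj hjW => by
    obtain ⟨k, rfl⟩ : ∃ k, j = k + 1 := ⟨j - 1, by omega⟩
    exact (queue_succ_nonneg hQ k).lt_of_ne' (hne _ hsj hjW)
  have hwinW : ∑ i ∈ Ico s (s + W), c i ≤ W * Cb := by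
    have := hwin (s + W - 1)
    rwa [show s + W - 1 + 1 - W = s by omega, ← Ico_add_one_right_eq_Icc,
      show s + W - 1 + 1 = s + W by omega] at this
  have hQW := queue_eq_add_sum_sub_of_pos hQ (Nat.le_add_right s W) hpos
  rw [hs, Nat.add_sub_cancel_left] at hQW
  linarith [hpos (s + W) (by omega) le_rfl]

end Queue

theorem stmt_5_general (c : ℕ → ℝ) (Cb : ℝ)
    (W : ℕ) (hW : 1 ≤ W)
    -- sliding-window constraint: average over the last min(t+1,W) periods ≤ C̄
    (hwin : ∀ t : ℕ, ∑ i ∈ Finset.Icc (t + 1 - W) t, c i ≤ W * Cb)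
    (Q : ℕ → ℝ) (hQ0 : Q 0 = 0)
    (hQ : ∀ t : ℕ, Q (t + 1) = max (Q t + c t - Cb) 0) :
    ∀ t0 : ℕ, ∃ t : ℕ, t0 ≤ t ∧ t < t0 + W ∧ Q t = 0 :=
  Nat.exists_mem_Ico_of_gap_le hW hQ0 fun _ hs => exists_queue_eq_zero_of_window hQ hW hwin hs

theorem stmt_5 (c : ℕ → ℝ) (hc : ∀ t, 0 ≤ c t) (Cb : ℝ) (hCb : 0 < Cb)
    (W : ℕ) (hW : 1 ≤ W)
    -- sliding-window constraint: average over the last min(t+1,W) periods ≤ C̄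
    (hwin : ∀ t : ℕ, ∑ i ∈ Finset.Icc (t + 1 - W) t, c i ≤ W * Cb)
    (Q : ℕ → ℝ) (hQ0 : Q 0 = 0)
    (hQ : ∀ t : ℕ, Q (t + 1) = max (Q t + c t - Cb) 0) :
    ∀ t0 : ℕ, ∃ t : ℕ, t0 ≤ t ∧ t < t0 + W ∧ Q t = 0 :=
  stmt_5_general c Cb W hW hwin Q hQ0 hQ
end

section
/- Boundedness of the virtual queue under the EMF constraint: if the sliding-window constraint (1/W)∑_{i=max(t-W+1,0)}^{t} c_i ≤ C̄ holds for all t and 0 ≤ c_t ≤ C_max, then the queue Q with Q_0 = 0 and Q_{t+1} = max(Q_t + c_t − C̄, 0) satisfies Q_t ≤ (W−1)(C_max − C̄) for all t (assuming C_max ≥ C̄). -/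
/-!
Unrolling the recursion, `Q t` is the sum of the net arrivals `c i - C̄` since the last time the
queue was empty. Any such sum splits into full windows of length `W`, each contributing at
most `0`, and a remainder of fewer than `W` terms, each at most `C_max - C̄`.
-/

open Finset

theorem exists_eq_sum_Ico_of_eq_max_add_zero (x Q : ℕ → ℝ) (hQ0 : Q 0 = 0)
    (hQ : ∀ t, Q (t + 1) = max (Q t + x t) 0) (t : ℕ) :
    ∃ s ≤ t, Q t = ∑ i ∈ Ico s t, x i := by
  induction t with
  | zero => exact ⟨0, le_rfl, by simp [hQ0]⟩
  | succ t ih =>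
    obtain ⟨s, hst, hQt⟩ := ih
    rcases le_total (Q t + x t) 0 with hempty | hbusy
    · exact ⟨t + 1, le_rfl, by simp [hQ t, max_eq_right hempty]⟩
    · refine ⟨s, by omega, ?_⟩
      rw [hQ t, max_eq_left hbusy, sum_Ico_succ_top hst, hQt]

theorem sum_Ico_le_of_window_sum_nonpos (x : ℕ → ℝ) (b : ℝ) (hb : 0 ≤ b) (hx : ∀ i, x i ≤ b)
    (W : ℕ) (hW : 1 ≤ W) (hwin : ∀ t, W ≤ t → ∑ i ∈ Ico (t - W) t, x i ≤ 0) (s t : ℕ) :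
    ∑ i ∈ Ico s t, x i ≤ (W - 1 : ℕ) * b := by
  induction t using Nat.strong_induction_on with
  | _ t ih =>
    by_cases hshort : t - s ≤ W - 1
    · calc ∑ i ∈ Ico s t, x i ≤ (t - s : ℕ) * b := by
            simpa [Nat.card_Ico] using sum_le_card_nsmul (Ico s t) x b fun i _ => hx i
        _ ≤ (W - 1 : ℕ) * b := by gcongr
    · calc ∑ i ∈ Ico s t, x i
            = ∑ i ∈ Ico s (t - W), x i + ∑ i ∈ Ico (t - W) t, x i :=
              (sum_Ico_consecutive x (by omega) (by omega)).symm
        _ ≤ (W - 1 : ℕ) * b + 0 := add_le_add (ih _ (by omega)) (hwin t (by omega))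
        _ = (W - 1 : ℕ) * b := add_zero _

theorem stmt_17_general (c : ℕ → ℝ) (Cb Cmax : ℝ) (hCmax : Cb ≤ Cmax)
    (hc : ∀ t, 0 ≤ c t ∧ c t ≤ Cmax)
    (W : ℕ) (hW : 1 ≤ W)
    (hwin : ∀ t : ℕ, ∑ i ∈ Finset.Icc (t + 1 - W) t, c i ≤ W * Cb)
    (Q : ℕ → ℝ) (hQ0 : Q 0 = 0)
    (hQ : ∀ t : ℕ, Q (t + 1) = max (Q t + c t - Cb) 0) :
    ∀ t : ℕ, Q t ≤ (W - 1 : ℕ) * (Cmax - Cb) := by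
  have hwin_net (t : ℕ) (ht : W ≤ t) : ∑ i ∈ Ico (t - W) t, (c i - Cb) ≤ 0 := by
    obtain ⟨u, rfl⟩ : ∃ u, t = u + 1 := ⟨t - 1, by omega⟩
    have hcard : #(Ico (u + 1 - W) (u + 1)) = W := by simp; omega
    have hsum := hwin u
    rw [← Ico_add_one_right_eq_Icc] at hsum
    rw [sum_sub_distrib, sum_const, hcard, nsmul_eq_mul]
    linarith
  intro t
  obtain ⟨s, -, hQt⟩ := exists_eq_sum_Ico_of_eq_max_add_zero (fun i => c i - Cb) Q hQ0
    (fun t => by rw [hQ t, add_sub_assoc]) t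
  rw [hQt]
  exact sum_Ico_le_of_window_sum_nonpos _ _ (sub_nonneg.2 hCmax)
    (fun i => sub_le_sub_right (hc i).2 Cb) W hW hwin_net s t

theorem stmt_17 (c : ℕ → ℝ) (Cb Cmax : ℝ) (hCb : 0 < Cb) (hCmax : Cb ≤ Cmax)
    (hc : ∀ t, 0 ≤ c t ∧ c t ≤ Cmax)
    (W : ℕ) (hW : 1 ≤ W)
    (hwin : ∀ t : ℕ, ∑ i ∈ Finset.Icc (t + 1 - W) t, c i ≤ W * Cb)
    (Q : ℕ → ℝ) (hQ0 : Q 0 = 0)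
    (hQ : ∀ t : ℕ, Q (t + 1) = max (Q t + c t - Cb) 0) :
    ∀ t : ℕ, Q t ≤ (W - 1 : ℕ) * (Cmax - Cb) :=
  stmt_17_general c Cb Cmax hCmax hc W hW hwin Q hQ0 hQ
end
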